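/- (LGD formula of Proposition 1.) Let x ∈ L²(ℝ, ℂ) and let g : ℝ → ℂ be such that g ∈ L²(ℝ) and Tg ∈ L²(ℝ), where Tg(τ) = τ·g(τ). Fix t ∈ ℝ and suppose there are r, Φ : ℝ → ℝ with V^t_g x(t, ν) = r(ν) · exp(2πi·Φ(ν)) for all ν in a neighbourhood of ω, where r and Φ are differentiable at ω and r(ω) > 0. Then the local group delay satisfies −Φ'(ω) = Re( V^t_{Tg} x(t, ω) / V^t_g x(t, ω) ). -/

import Mathlib

/-!
After the substitution `s = τ - t`, `ν ↦ V^t_g x(t, ν)` is the Fourier transform of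
`h(s) = x(s + t) · conj(g s)`, and `V^t_{Tg} x(t, ·)` is the Fourier transform of `s · h(s)`.
Both are integrable: `h` because its Fourier transform does not vanish at `ω` (as `r ω > 0`), and
`s · h(s)` by Cauchy–Schwarz from `x, Tg ∈ L²`. So the STFT is differentiable in `ν` with derivative
`-2πi · V^t_{Tg} x(t, ν)`. On the other hand the logarithmic derivative of `r · exp(2πiΦ)` is
`r'/r + 2πiΦ'`, whose imaginary part is `2πΦ'`; comparing the two gives the formula.
-/

open MeasureTheory Complex Real Filter

/-- Time-invariant STFT:
`V^t_g x (t, ω) = ∫ τ, x τ * conj (g (τ - t)) * exp (-2πiω(τ - t))`. -/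
noncomputable def stftTimeInv (g x : ℝ → ℂ) (t ω : ℝ) : ℂ :=
  ∫ τ : ℝ, x τ * (starRingEnd ℂ) (g (τ - t)) *
    Complex.exp (-2 * Real.pi * Complex.I * (ω : ℂ) * ((τ : ℂ) - (t : ℂ)))

open FourierTransform Topology ComplexConjugate

theorem integrable_of_fourier_ne_zero {V E : Type*} [NormedAddCommGroup V]
    [InnerProductSpace ℝ V] [FiniteDimensional ℝ V] [MeasurableSpace V] [BorelSpace V]
    [NormedAddCommGroup E] [NormedSpace ℂ E] {f : V → E} {w : V} (h : 𝓕 f w ≠ 0) :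
    Integrable f :=
  (fourierIntegral_convergent_iff w).1 (.of_integral_ne_zero h)

theorem MeasureTheory.MemLp.integrable_comp_add_right_mul_conj {𝕜 : Type*} [RCLike 𝕜]
    {a b : ℝ → 𝕜} (ha : MemLp a 2) (hb : MemLp b 2) (t : ℝ) :
    Integrable fun s : ℝ => a (s + t) * conj (b s) :=
  (ha.comp_measurePreserving (measurePreserving_add_right volume t)).integrable_mul hb.star

theorem stftTimeInv_eq_fourier (g x : ℝ → ℂ) (t ω : ℝ) :
    stftTimeInv g x t ω = 𝓕 (fun s : ℝ => x (s + t) * conj (g s)) ω := by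
  rw [Real.fourier_real_eq_integral_exp_smul, stftTimeInv]
  conv_rhs => rw [← integral_sub_right_eq_self _ t]
  refine integral_congr_ae (.of_forall fun τ => ?_)
  simp only [sub_add_cancel, smul_eq_mul]
  push_cast
  ring_nf

theorem stftTimeInv_timeWeighted_eq_fourier (g x : ℝ → ℂ) (t ω : ℝ) :
    stftTimeInv (fun τ : ℝ => (τ : ℂ) * g τ) x t ω =
      𝓕 (fun s : ℝ => s • (x (s + t) * conj (g s))) ω := by
  rw [stftTimeInv_eq_fourier]
  refine congrArg (fun f : ℝ → ℂ => 𝓕 f ω) (funext fun s => ?_)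
  simp only [map_mul, conj_ofReal, real_smul]
  ring

theorem hasDerivAt_stftTimeInv {g x : ℝ → ℂ} {t : ℝ}
    (hf : Integrable fun s : ℝ => x (s + t) * conj (g s))
    (hTf : Integrable fun s : ℝ => x (s + t) * conj ((s : ℂ) * g s)) (ω : ℝ) :
    HasDerivAt (stftTimeInv g x t)
      (-2 * π * I * stftTimeInv (fun τ : ℝ => (τ : ℂ) * g τ) x t ω) ω := by
  have hTf' : Integrable fun s : ℝ => s • (x (s + t) * conj (g s)) := by
    refine hTf.congr (.of_forall fun s => ?_)
    simp only [map_mul, conj_ofReal, real_smul]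
    ring
  rw [funext (stftTimeInv_eq_fourier g x t), stftTimeInv_timeWeighted_eq_fourier,
    Real.fourier_real_eq, ← integral_const_mul]
  refine (Real.hasDerivAt_fourier hf hTf' ω).congr_deriv ?_
  rw [Real.fourier_real_eq]
  refine integral_congr_ae (.of_forall fun s => ?_)
  simp only [Circle.smul_def, smul_eq_mul, real_smul]
  ring

theorem HasDerivAt.eq_re_div_of_polar {f : ℝ → ℂ} {f' : ℂ} {r Φ : ℝ → ℝ} {r' Φ' ω : ℝ}
    (hf : HasDerivAt f f' ω)
    (hpolar : f =ᶠ[𝓝 ω] fun ν => (r ν : ℂ) * cexp (2 * π * I * (Φ ν : ℂ)))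
    (hr : HasDerivAt r r' ω) (hΦ : HasDerivAt Φ Φ' ω) (hr₀ : r ω ≠ 0) :
    Φ' = (f' / (2 * π * I * f ω)).re := by
  have hpolar' : HasDerivAt (fun ν => (r ν : ℂ) * cexp (2 * π * I * (Φ ν : ℂ)))
      ((r' + 2 * π * I * r ω * Φ') * cexp (2 * π * I * (Φ ω : ℂ))) ω := by
    refine (hr.ofReal_comp.mul (hΦ.ofReal_comp.const_mul (2 * π * I)).cexp).congr_deriv ?_
    ring
  rw [(hpolar.hasDerivAt_iff.1 hf).unique hpolar', hpolar.self_of_nhds]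
  have hπ : (π : ℂ) ≠ 0 := ofReal_ne_zero.2 pi_ne_zero
  have hr₀' : (r ω : ℂ) ≠ 0 := ofReal_ne_zero.2 hr₀
  have : ((r' + 2 * π * I * r ω * Φ') * cexp (2 * π * I * (Φ ω : ℂ))) /
      (2 * π * I * (r ω * cexp (2 * π * I * (Φ ω : ℂ)))) =
      Φ' - I * (r' / (2 * π * r ω) : ℝ) := by
    push_cast
    field_simp
    linear_combination (r' : ℂ) * I_sq
  rw [this]
  simp only [sub_re, ofReal_re, mul_re, I_re, I_im, ofReal_im]
  ring

theorem lgd_formula_general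
    (x g : ℝ → ℂ)
    (hx : MemLp x 2 (volume : Measure ℝ))
    (hTg : MemLp (fun τ : ℝ => (τ : ℂ) * g τ) 2 (volume : Measure ℝ))
    (t ω : ℝ) (r Φ : ℝ → ℝ) (r' Φ' : ℝ)
    (hpolar : ∀ᶠ ν in nhds ω,
      stftTimeInv g x t ν =
        (r ν : ℂ) * Complex.exp (2 * Real.pi * Complex.I * (Φ ν : ℂ)))
    (hr : HasDerivAt r r' ω)
    (hΦ : HasDerivAt Φ Φ' ω)
    (hrpos : 0 < r ω) :
    -Φ' = (stftTimeInv (fun τ : ℝ => (τ : ℂ) * g τ) x t ω /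
      stftTimeInv g x t ω).re := by
  have hV : stftTimeInv g x t ω ≠ 0 := by
    rw [hpolar.self_of_nhds]
    exact mul_ne_zero (ofReal_ne_zero.2 hrpos.ne') (exp_ne_zero _)
  have hf : Integrable fun s : ℝ => x (s + t) * conj (g s) :=
    integrable_of_fourier_ne_zero (stftTimeInv_eq_fourier g x t ω ▸ hV)
  have hderiv := hasDerivAt_stftTimeInv hf (hx.integrable_comp_add_right_mul_conj hTg t) ω
  rw [hderiv.eq_re_div_of_polar hpolar hr hΦ hrpos.ne']
  have h2πI : (2 * π * I : ℂ) ≠ 0 := by simp [pi_ne_zero]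
  simp only [neg_mul, neg_div, mul_div_mul_left _ _ h2πI, neg_re, neg_neg]

/-- LGD formula of Proposition 1: For `x ∈ L²` and `g` with `g, Tg ∈ L²`
(`Tg τ = τ · g τ`), if near `ω` we have the polar decomposition
`V^t_g x (t, ·) = r · exp(2πiΦ)` with `r`, `Φ` differentiable at `ω` and `r ω > 0`, then
`−Φ' ω = Re (V^t_{Tg} x (t, ω) / V^t_g x (t, ω))`. -/
theorem lgd_formula
    (x g : ℝ → ℂ)
    (hx : MemLp x 2 (volume : Measure ℝ))
    (hg : MemLp g 2 (volume : Measure ℝ))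
    (hTg : MemLp (fun τ : ℝ => (τ : ℂ) * g τ) 2 (volume : Measure ℝ))
    (t ω : ℝ) (r Φ : ℝ → ℝ) (r' Φ' : ℝ)
    (hpolar : ∀ᶠ ν in nhds ω,
      stftTimeInv g x t ν =
        (r ν : ℂ) * Complex.exp (2 * Real.pi * Complex.I * (Φ ν : ℂ)))
    (hr : HasDerivAt r r' ω)
    (hΦ : HasDerivAt Φ Φ' ω)
    (hrpos : 0 < r ω) :
    -Φ' = (stftTimeInv (fun τ : ℝ => (τ : ℂ) * g τ) x t ω /
      stftTimeInv g x t ω).re :=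
  lgd_formula_general x g hx hTg t ω r Φ r' Φ' hpolar hr hΦ hrpos
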